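/- arXiv:2411.08824 — 8 statements merged into one kernel-verified Lean document; each statement's English description precedes it below -/
import Mathlib

section
/- Let Q be a symmetric real n×n matrix, i ≠ j indices, S a semi-symmetry set for (i,j), z a real number, and Q_mod the modified (n+1)×(n+1) matrix. For every binary vector x ∈ {0,1}^n with x_i = 0 and x_j = 0, the energy of the extended vector (x,1) with ancilla value 1 satisfies H_{Q_mod}((x,1)) = H_Q(x) + z + σ(x). -/
open Finset

/-- Energy of a binary vector `x` w.r.t. a QUBO matrix `Q`:
`H_Q(x) = Σ_k Q[k,k]·x_k + Σ_{k<l} Q[k,l]·x_k·x_l`. -/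
def energy {m : ℕ} (Q : Fin m → Fin m → ℝ) (x : Fin m → ℝ) : ℝ :=
  ∑ k, Q k k * x k + ∑ k, ∑ l, if k < l then Q k l * x k * x l else 0

/-- `x` is a binary (0/1-valued) vector. -/
def IsBinary {m : ℕ} (x : Fin m → ℝ) : Prop := ∀ k, x k = 0 ∨ x k = 1

/-- Entries of the new (n+1)-st row/column of the modified matrix. -/
def modCol {n : ℕ} (Q : Fin n → Fin n → ℝ) (i j : Fin n) (S : Finset (Fin n)) (z : ℝ)
    (k : Fin n) : ℝ :=
  if k = i ∨ k = j then -2 * z else if k ∈ S then Q i k else 0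

/-- Entries of the modified matrix among the original n indices. -/
def modCore {n : ℕ} (Q : Fin n → Fin n → ℝ) (i j : Fin n) (S : Finset (Fin n)) (z : ℝ)
    (k l : Fin n) : ℝ :=
  if k = i ∧ l = i then Q i i + z
  else if k = j ∧ l = j then Q j j + z
  else if (k = i ∧ l = j) ∨ (k = j ∧ l = i) then Q i j + 2 * z
  else if (k = i ∨ k = j) ∧ l ∈ S then 0
  else if (l = i ∨ l = j) ∧ k ∈ S then 0
  else Q k l

/-- The modified (n+1)×(n+1) QUBO matrix `Q_mod` obtained from `Q` by factoring out the
semi-symmetry `S` of the conflicting pair `(i,j)` into the ancilla qubit (index `n+1`). -/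
def modQ {n : ℕ} (Q : Fin n → Fin n → ℝ) (i j : Fin n) (S : Finset (Fin n)) (z : ℝ) :
    Fin (n + 1) → Fin (n + 1) → ℝ := fun a b =>
  if ha : a = Fin.last n then
    if hb : b = Fin.last n then z
    else modCol Q i j S z (b.castPred hb)
  else if hb : b = Fin.last n then modCol Q i j S z (a.castPred ha)
  else modCore Q i j S z (a.castPred ha) (b.castPred hb)

/-- for binary `x` with `x i = 0` and `x j = 0`, extending by ancilla
value `1` gives `H_{Q_mod}((x,1)) = energy Q x + z + ∑ k ∈ S, Q i k * x k`. -/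
theorem stmt1
    {n : ℕ} (Q : Fin n → Fin n → ℝ) (i j : Fin n) (S : Finset (Fin n)) (z : ℝ)
    (hQsymm : ∀ k l, Q k l = Q l k) (hij : i ≠ j)
    (hiS : i ∉ S) (hjS : j ∉ S) (hsemi : ∀ k ∈ S, Q i k = Q j k)
    (x : Fin n → ℝ) (hx : IsBinary x)
    (hxi : x i = 0) (hxj : x j = 0) :
    energy (modQ Q i j S z) (Fin.snoc x 1) = energy Q x + z + ∑ k ∈ S, Q i k * x k := by
  have hcc : ∀ k l : Fin n, modQ Q i j S z k.castSucc l.castSucc = modCore Q i j S z k l := by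
    intro k l
    simp [modQ, (Fin.castSucc_lt_last k).ne, (Fin.castSucc_lt_last l).ne]
  have hcl : ∀ k : Fin n, modQ Q i j S z k.castSucc (Fin.last n) = modCol Q i j S z k := by
    intro k; simp [modQ, (Fin.castSucc_lt_last k).ne]
  have hll : modQ Q i j S z (Fin.last n) (Fin.last n) = z := by simp [modQ]
  have hnl : ∀ b : Fin (n + 1), ¬ (Fin.last n < b) := fun b => (Fin.le_last b).not_gt
  have hcore : ∀ k l : Fin n, modCore Q i j S z k l * x k * x l = Q k l * x k * x l := by
    intro k l
    by_cases hk : k = i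
    · subst hk; simp [hxi]
    by_cases hk' : k = j
    · subst hk'; simp [hxj]
    by_cases hl : l = i
    · subst hl; simp [hxi]
    by_cases hl' : l = j
    · subst hl'; simp [hxj]
    simp [modCore, hk, hk', hl, hl']
  have hdiag : ∀ k : Fin n, modCore Q i j S z k k * x k = Q k k * x k := by
    intro k
    by_cases hk : k = i
    · subst hk; simp [hxi]
    by_cases hk' : k = j
    · subst hk'; simp [hxj]
    simp [modCore, hk, hk']
  have hcol : ∀ k : Fin n, modCol Q i j S z k * x k = (if k ∈ S then Q i k * x k else 0) := by
    intro k
    by_cases hk : k = i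
    · subst hk; simp [hxi]
    by_cases hk' : k = j
    · subst hk'; simp [hxj]
    simp [modCol, hk, hk', ite_mul]
  simp only [energy, Fin.sum_univ_castSucc, Fin.snoc_castSucc, Fin.snoc_last, hcc, hcl, hll,
    Fin.castSucc_lt_castSucc_iff, Fin.castSucc_lt_last, hnl, if_true, if_false, mul_one,
    Finset.sum_const_zero, add_zero, hdiag, hcol]
  have h2 : ∀ k : Fin n, (∑ l : Fin n, if k < l then modCore Q i j S z k l * x k * x l else 0)
      = ∑ l : Fin n, if k < l then Q k l * x k * x l else 0 := by
    intro k
    refine Finset.sum_congr rfl fun l _ => ?_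
    by_cases h : k < l <;> simp [h, hcore]
  simp only [h2]
  rw [Finset.sum_add_distrib, Finset.sum_ite_mem, Finset.univ_inter]
  ring
end

section
/- Let Q be a symmetric real n×n matrix, i ≠ j indices, S a semi-symmetry set for (i,j), z a real number, and Q_mod the modified (n+1)×(n+1) matrix. For every binary vector x ∈ {0,1}^n with x_i = 1 and x_j = 0, the energy of the extended vector (x,0) with ancilla value 0 satisfies H_{Q_mod}((x,0)) = H_Q(x) + z − σ(x). -/
open Finset

/-- Indicator of `{i, j}`. -/
def aInd {n : ℕ} (i j k : Fin n) : ℝ := if k = i ∨ k = j then 1 else 0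

/-- The column `k ↦ Q i k` restricted to `S`. -/
def bCol {n : ℕ} (Q : Fin n → Fin n → ℝ) (i : Fin n) (S : Finset (Fin n)) (k : Fin n) : ℝ :=
  if k ∈ S then Q i k else 0

lemma energy_sym {m : ℕ} (M : Fin m → Fin m → ℝ) (hM : ∀ k l, M k l = M l k)
    (x : Fin m → ℝ) (hx : IsBinary x) :
    energy M x = ((∑ k, ∑ l, M k l * x k * x l) + ∑ k, M k k * x k) / 2 := by
  have hxx : ∀ k, x k * x k = x k := by
    intro k; rcases hx k with h | h <;> simp [h]
  have key : (∑ k, ∑ l, M k l * x k * x l)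
      = 2 * (∑ k, ∑ l, if k < l then M k l * x k * x l else 0) + ∑ k, M k k * x k := by
    have hpt : ∀ k l : Fin m, M k l * x k * x l
        = (if k < l then M k l * x k * x l else 0)
          + (if l < k then M k l * x k * x l else 0)
          + (if k = l then M k l * x k * x l else 0) := by
      intro k l
      rcases lt_trichotomy k l with h | h | h
      · simp [h, h.ne, not_lt.mpr h.le]
      · simp [h]
      · simp [h, h.ne', not_lt.mpr h.le]
    calc (∑ k, ∑ l, M k l * x k * x l)
        = (∑ k, ∑ l, if k < l then M k l * x k * x l else 0)
          + (∑ k, ∑ l, if l < k then M k l * x k * x l else 0)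
          + (∑ k, ∑ l, if k = l then M k l * x k * x l else 0) := by
          simp_rw [← Finset.sum_add_distrib, ← hpt]
      _ = _ := by
          have h2 : (∑ k, ∑ l, if l < k then M k l * x k * x l else 0)
              = (∑ k, ∑ l, if k < l then M k l * x k * x l else 0) := by
            rw [Finset.sum_comm]
            refine Finset.sum_congr rfl fun k _ => Finset.sum_congr rfl fun l _ => ?_
            rw [hM l k]; ring_nf
          have h3 : (∑ k, ∑ l, if k = l then M k l * x k * x l else 0)
              = ∑ k, M k k * x k := by
            refine Finset.sum_congr rfl fun k _ => ?_
            rw [Finset.sum_ite_eq univ k (fun l => M k l * x k * x l)]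
            simp [hxx k, mul_assoc]
          rw [h2, h3]; ring
  rw [energy, key]; ring

lemma energy_snoc {n : ℕ} (Q : Fin n → Fin n → ℝ) (i j : Fin n) (S : Finset (Fin n)) (z : ℝ)
    (x : Fin n → ℝ) :
    energy (modQ Q i j S z) (Fin.snoc x 0) = energy (modCore Q i j S z) x := by
  unfold energy
  simp only [Fin.sum_univ_castSucc, Fin.snoc_castSucc, Fin.snoc_last]
  simp [modQ, Fin.castSucc_lt_castSucc_iff, Fin.castSucc_lt_last, (Fin.castSucc_lt_last _).ne,
    mul_zero, Fin.castPred_castSucc]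

lemma modCore_eq {n : ℕ} (Q : Fin n → Fin n → ℝ) (i j : Fin n) (S : Finset (Fin n)) (z : ℝ)
    (hQsymm : ∀ k l, Q k l = Q l k) (hij : i ≠ j)
    (hiS : i ∉ S) (hjS : j ∉ S) (hsemi : ∀ k ∈ S, Q i k = Q j k) (k l : Fin n) :
    modCore Q i j S z k l
      = Q k l + 2 * z * (aInd i j k * aInd i j l)
        - (if k = l then z * aInd i j k else 0)
        - aInd i j k * bCol Q i S l
        - aInd i j l * bCol Q i S k := by
  unfold aInd bCol
  by_cases hki : k = i <;> by_cases hkj : k = j <;> by_cases hli : l = i <;>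
    by_cases hlj : l = j <;> by_cases hkS : k ∈ S <;> by_cases hlS : l ∈ S <;>
      simp_all [modCore] <;> first
        | ring1
        | (rw [hQsymm k i] ; ring1)
        | (rw [hQsymm k j, ← hsemi k (by assumption)] ; ring1)
        | (rw [← hsemi l (by assumption)] ; ring1)
        | (intro h; subst h; simp_all)
        | (rw [if_neg (by intro h; subst h; simp_all)] ; ring1)

lemma modCore_diag {n : ℕ} (Q : Fin n → Fin n → ℝ) (i j : Fin n) (S : Finset (Fin n)) (z : ℝ)
    (hij : i ≠ j) (hiS : i ∉ S) (hjS : j ∉ S) (k : Fin n) :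
    modCore Q i j S z k k = Q k k + z * aInd i j k := by
  unfold aInd
  by_cases hki : k = i <;> by_cases hkj : k = j <;> simp_all [modCore]

/-- for binary `x` with `x i = 1` and `x j = 0`, extending by ancilla
value `0` gives `H_{Q_mod}((x,0)) = energy Q x + z - ∑ k ∈ S, Q i k * x k`. -/
theorem stmt2
    {n : ℕ} (Q : Fin n → Fin n → ℝ) (i j : Fin n) (S : Finset (Fin n)) (z : ℝ)
    (hQsymm : ∀ k l, Q k l = Q l k) (hij : i ≠ j)
    (hiS : i ∉ S) (hjS : j ∉ S) (hsemi : ∀ k ∈ S, Q i k = Q j k)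
    (x : Fin n → ℝ) (hx : IsBinary x)
    (hxi : x i = 1) (hxj : x j = 0) :
    energy (modQ Q i j S z) (Fin.snoc x 0) = energy Q x + z - ∑ k ∈ S, Q i k * x k := by
  have hxx : ∀ k, x k * x k = x k := by
    intro k; rcases hx k with h | h <;> simp [h]
  -- A = ∑ a k * x k = 1
  have hA : ∑ k, aInd i j k * x k = 1 := by
    have h : ∀ k : Fin n, aInd i j k * x k
        = (if k = i then x k else 0) + (if k = j then x k else 0) := by
      intro k
      by_cases hki : k = i <;> by_cases hkj : k = j <;> simp_all [aInd]
    simp_rw [h]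
    rw [Finset.sum_add_distrib]
    simp [hxi, hxj]
  -- B = ∑ b k * x k = σ(x)
  have hB : ∑ k, bCol Q i S k * x k = ∑ k ∈ S, Q i k * x k := by
    unfold bCol
    simp_rw [ite_mul, zero_mul, Finset.sum_ite_mem, Finset.univ_inter]
  -- symmetry of modCore
  have hMsym : ∀ k l, modCore Q i j S z k l = modCore Q i j S z l k := by
    intro k l
    rw [modCore_eq Q i j S z hQsymm hij hiS hjS hsemi,
      modCore_eq Q i j S z hQsymm hij hiS hjS hsemi]
    by_cases h : k = l
    · subst h; ring1
    · rw [if_neg h, if_neg (fun h' => h h'.symm), hQsymm k l]; ring1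
  rw [energy_snoc, energy_sym _ hMsym x hx, energy_sym Q hQsymm x hx]
  -- diagonal sums
  have hdiag : ∑ k, modCore Q i j S z k k * x k = (∑ k, Q k k * x k) + z := by
    simp_rw [modCore_diag Q i j S z hij hiS hjS, add_mul]
    rw [Finset.sum_add_distrib]
    congr 1
    simp_rw [mul_assoc, ← Finset.mul_sum]
    rw [hA, mul_one]
  -- rows of the quadratic form
  have hrow : ∀ k, ∑ l, modCore Q i j S z k l * x k * x l
      = (∑ l, Q k l * x k * x l)
        + (2 * z * (aInd i j k * x k)) * (∑ l, aInd i j l * x l)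
        - z * (aInd i j k * x k)
        - (aInd i j k * x k) * (∑ l, bCol Q i S l * x l)
        - (∑ l, aInd i j l * x l) * (bCol Q i S k * x k) := by
    intro k
    have hpt : ∀ l, modCore Q i j S z k l * x k * x l
        = Q k l * x k * x l
          + (2 * z * (aInd i j k * x k)) * (aInd i j l * x l)
          - (if k = l then z * (aInd i j k * x k * x l) else 0)
          - (aInd i j k * x k) * (bCol Q i S l * x l)
          - (aInd i j l * x l) * (bCol Q i S k * x k) := by
      intro l
      rw [modCore_eq Q i j S z hQsymm hij hiS hjS hsemi]
      by_cases h : k = l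
      · rw [if_pos h, if_pos h]; ring1
      · rw [if_neg h, if_neg h]; ring1
    simp_rw [hpt]
    rw [Finset.sum_sub_distrib, Finset.sum_sub_distrib, Finset.sum_sub_distrib,
      Finset.sum_add_distrib, ← Finset.mul_sum, ← Finset.mul_sum, ← Finset.sum_mul]
    congr 1
    congr 1
    congr 1
    congr 1
    rw [Finset.sum_ite_eq univ k (fun l => z * (aInd i j k * x k * x l))]
    simp [mul_assoc, hxx k]
  have hquad : ∑ k, ∑ l, modCore Q i j S z k l * x k * x l
      = (∑ k, ∑ l, Q k l * x k * x l) + z - 2 * (∑ k ∈ S, Q i k * x k) := by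
    simp_rw [hrow, hA, hB]
    rw [Finset.sum_sub_distrib, Finset.sum_sub_distrib, Finset.sum_sub_distrib,
      Finset.sum_add_distrib]
    have e1 : ∑ k, (2 * z * (aInd i j k * x k)) * 1 = 2 * z := by
      simp_rw [mul_one, mul_assoc, ← Finset.mul_sum]
      rw [hA, mul_one]
    have e2 : ∑ k, z * (aInd i j k * x k) = z := by
      rw [← Finset.mul_sum, hA, mul_one]
    have e3 : ∑ k, (aInd i j k * x k) * (∑ l ∈ S, Q i l * x l) = ∑ l ∈ S, Q i l * x l := by
      rw [← Finset.sum_mul, hA, one_mul]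
    have e4 : ∑ k, 1 * (bCol Q i S k * x k) = ∑ l ∈ S, Q i l * x l := by
      simp_rw [one_mul]; rw [hB]
    rw [e1, e2, e3, e4]; ring
  rw [hdiag, hquad]; ring
end

section
/- Let Q be a symmetric real n×n matrix, i ≠ j indices, S a semi-symmetry set for (i,j), z a real number, and Q_mod the modified (n+1)×(n+1) matrix. For every binary vector x ∈ {0,1}^n with x_i = 1 and x_j = 0, the energy of the extended vector (x,1) with ancilla value 1 satisfies H_{Q_mod}((x,1)) = H_Q(x). -/
open Finset

/-- for binary `x` with `x i = 1` and `x j = 0`, extending by ancilla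
value `1` gives `H_{Q_mod}((x,1)) = energy Q x`. -/
theorem stmt3
    {n : ℕ} (Q : Fin n → Fin n → ℝ) (i j : Fin n) (S : Finset (Fin n)) (z : ℝ)
    (hQsymm : ∀ k l, Q k l = Q l k) (hij : i ≠ j)
    (hiS : i ∉ S) (hjS : j ∉ S) (hsemi : ∀ k ∈ S, Q i k = Q j k)
    (x : Fin n → ℝ) (hx : IsBinary x)
    (hxi : x i = 1) (hxj : x j = 0) :
    energy (modQ Q i j S z) (Fin.snoc x 1) = energy Q x := by
  unfold energy
  -- step 1 : expand the snoc sums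
  have step1 :
      (∑ k, modQ Q i j S z k k * (Fin.snoc x 1 : Fin (n+1) → ℝ) k
        + ∑ k, ∑ l, if k < l then modQ Q i j S z k l * (Fin.snoc x 1 : Fin (n+1) → ℝ) k * (Fin.snoc x 1 : Fin (n+1) → ℝ) l else 0)
      = (∑ k, modCore Q i j S z k k * x k + z)
        + ((∑ k, ∑ l, if k < l then modCore Q i j S z k l * x k * x l else 0)
          + ∑ k, modCol Q i j S z k * x k) := by
    rw [Fin.sum_univ_castSucc]
    rw [Fin.sum_univ_castSucc (f := fun k => ∑ l, if k < l then modQ Q i j S z k l * (Fin.snoc x 1 : Fin (n+1) → ℝ) k * (Fin.snoc x 1 : Fin (n+1) → ℝ) l else 0)]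
    simp only [Fin.sum_univ_castSucc (n := n)]
    simp [modQ, Fin.snoc_castSucc, Fin.snoc_last, (Fin.castSucc_lt_last _).ne,
      Fin.castPred_castSucc, Fin.castSucc_lt_castSucc_iff, Fin.castSucc_lt_last,
      lt_irrefl]
    have hnl : ∀ k : Fin n, ¬ (Fin.last n < k.castSucc) := fun k => (Fin.castSucc_lt_last k).asymm
    simp [hnl, Finset.sum_add_distrib]
  rw [step1]
  -- diagonal sum
  have hdiag : ∑ k, modCore Q i j S z k k * x k = ∑ k, Q k k * x k + z := by
    have hpt : ∀ k, modCore Q i j S z k k * x k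
        = Q k k * x k + (if k = i then z * x k else 0) + (if k = j then z * x k else 0) := by
      intro k
      unfold modCore
      split_ifs <;> simp_all <;> ring
    rw [Finset.sum_congr rfl (fun k _ => hpt k)]
    simp [Finset.sum_add_distrib, Finset.sum_ite_eq', hxi, hxj]
  -- column sum
  have hcol : ∑ k, modCol Q i j S z k * x k = -2 * z + ∑ s ∈ S, Q i s * x s := by
    have hpt : ∀ k, modCol Q i j S z k * x k
        = (if k = i then -2 * z * x k else 0) + (if k = j then -2 * z * x k else 0)
          + (if k ∈ S then Q i k * x k else 0) := by
      intro k
      unfold modCol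
      split_ifs <;> simp_all <;> ring
    rw [Finset.sum_congr rfl (fun k _ => hpt k)]
    simp [Finset.sum_add_distrib, Finset.sum_ite_eq', hxi, hxj, Finset.sum_ite_mem]
  -- core double sum
  have hcore : (∑ k, ∑ l, if k < l then modCore Q i j S z k l * x k * x l else 0)
      = (∑ k, ∑ l, if k < l then Q k l * x k * x l else 0) - ∑ s ∈ S, Q i s * x s := by
    have hpt : ∀ k l : Fin n, (if k < l then modCore Q i j S z k l * x k * x l else 0)
        = (if k < l then Q k l * x k * x l else 0)
          + (if k = i then (if l ∈ S ∧ i < l then -(Q i l * x l) else 0) else 0)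
          + (if l = i then (if k ∈ S ∧ k < i then -(Q i k * x k) else 0) else 0) := by
      intro k l
      by_cases hkl : k < l
      · have hne : k ≠ l := ne_of_lt hkl
        by_cases hki : k = i
        · have hli : l ≠ i := fun h => hne (hki.trans h.symm)
          by_cases hlj : l = j
          · simp [modCore, hki, hlj, hli, hij, Ne.symm hij, hjS, hkl, hxj]
          · by_cases hlS : l ∈ S
            · have h : i < l := hki ▸ hkl
              simp [modCore, hki, hli, hlj, hlS, hkl, h, hxi, hij, Ne.symm hij]
            · simp [modCore, hki, hli, hlj, hlS, hkl, hiS, hij, Ne.symm hij]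
        · by_cases hkj : k = j
          · have hlj : l ≠ j := fun h => hne (hkj.trans h.symm)
            by_cases hli : l = i
            · simp [modCore, hki, hkj, hli, hlj, hjS, hiS, hkl, hxj, hij, Ne.symm hij]
            · by_cases hlS : l ∈ S
              · simp [modCore, hki, hkj, hli, hlj, hlS, hkl, hxj, hjS, hij, Ne.symm hij]
              · simp [modCore, hki, hkj, hli, hlj, hlS, hkl, hjS, hij, Ne.symm hij]
          · by_cases hli : l = i
            · by_cases hkS : k ∈ S
              · have h : k < i := hli ▸ hkl
                simp [modCore, hki, hkj, hli, hkS, hkl, h, hxi, hQsymm k i, hij, Ne.symm hij]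
              · simp [modCore, hki, hkj, hli, hkS, hkl, hij, Ne.symm hij]
            · by_cases hlj : l = j
              · by_cases hkS : k ∈ S
                · simp [modCore, hki, hkj, hli, hlj, hkS, hkl, hxj, hij, Ne.symm hij, hiS]
                · simp [modCore, hki, hkj, hli, hlj, hkS, hkl, hij, Ne.symm hij]
              · simp [modCore, hki, hkj, hli, hlj, hkl, hij, Ne.symm hij]
      · have e1 : (if k = i then (if l ∈ S ∧ i < l then -(Q i l * x l) else 0) else 0) = 0 := by
          split_ifs with h1 h2
          · rw [h1] at hkl; exact absurd h2.2 hkl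
          · rfl
          · rfl
        have e2 : (if l = i then (if k ∈ S ∧ k < i then -(Q i k * x k) else 0) else 0) = 0 := by
          split_ifs with h1 h2
          · rw [h1] at hkl; exact absurd h2.2 hkl
          · rfl
          · rfl
        simp [hkl, e1, e2]
    rw [Finset.sum_congr rfl (fun k _ => Finset.sum_congr rfl (fun l _ => hpt k l))]
    simp only [Finset.sum_add_distrib]
    have e2 : (∑ k : Fin n, ∑ l : Fin n, if k = i then (if l ∈ S ∧ i < l then -(Q i l * x l) else 0) else 0)
        = ∑ l : Fin n, (if l ∈ S ∧ i < l then -(Q i l * x l) else 0) := by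
      rw [Finset.sum_eq_single i]
      · simp
      · intro b _ hb; simp [hb]
      · simp
    have e3 : (∑ k : Fin n, ∑ l : Fin n, if l = i then (if k ∈ S ∧ k < i then -(Q i k * x k) else 0) else 0)
        = ∑ k : Fin n, (if k ∈ S ∧ k < i then -(Q i k * x k) else 0) := by
      apply Finset.sum_congr rfl
      intro k _
      simp [Finset.sum_ite_eq']
    rw [e2, e3]
    have e4 : (∑ l : Fin n, (if l ∈ S ∧ i < l then -(Q i l * x l) else 0))
        + (∑ k : Fin n, (if k ∈ S ∧ k < i then -(Q i k * x k) else 0))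
        = -∑ s ∈ S, Q i s * x s := by
      rw [← Finset.sum_add_distrib]
      have : ∀ m : Fin n, (if m ∈ S ∧ i < m then -(Q i m * x m) else 0)
          + (if m ∈ S ∧ m < i then -(Q i m * x m) else 0)
          = if m ∈ S then -(Q i m * x m) else 0 := by
        intro m
        by_cases hm : m ∈ S
        · have hne : i ≠ m := fun h => hiS (h ▸ hm)
          rcases lt_or_gt_of_ne hne with h | h
          · simp [hm, h, h.asymm]
          · simp [hm, h, h.asymm]
        · simp [hm]
      rw [Finset.sum_congr rfl (fun m _ => this m)]
      simp [Finset.sum_ite_mem]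
    linarith [e4]
  rw [hdiag, hcol, hcore]
  ring
end

section
/- Let Q be a symmetric real n×n matrix, i ≠ j indices, S a semi-symmetry set for (i,j), z a real number, and Q_mod the modified (n+1)×(n+1) matrix. For every binary vector x ∈ {0,1}^n with x_i = 0 and x_j = 1, the energy of the extended vector (x,0) with ancilla value 0 satisfies H_{Q_mod}((x,0)) = H_Q(x) + z − σ(x). -/
open Finset

lemma energy_snoc_zero {n : ℕ} (M : Fin (n+1) → Fin (n+1) → ℝ) (x : Fin n → ℝ) :
    energy M (Fin.snoc x 0) =
      ∑ k, M k.castSucc k.castSucc * x k +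
      ∑ k, ∑ l, if k < l then M k.castSucc l.castSucc * x k * x l else 0 := by
  unfold energy
  rw [Fin.sum_univ_castSucc, Fin.sum_univ_castSucc]
  simp only [Fin.snoc_castSucc, Fin.snoc_last, mul_zero, ite_self, Finset.sum_const_zero,
    add_zero]
  have hlast : ∀ l : Fin (n+1), ¬ (Fin.last n < l) := fun l => not_lt.2 (Fin.le_last l)
  simp only [hlast, if_false, Finset.sum_const_zero, add_zero]
  congr 1
  refine Finset.sum_congr rfl fun k _ => ?_
  rw [Fin.sum_univ_castSucc]
  simp [Fin.castSucc_lt_castSucc_iff]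

/-- for binary `x` with `x i = 0` and `x j = 1`, extending by ancilla
value `0` gives `H_{Q_mod}((x,0)) = energy Q x + z - ∑ k ∈ S, Q i k * x k`. -/
theorem stmt4
    {n : ℕ} (Q : Fin n → Fin n → ℝ) (i j : Fin n) (S : Finset (Fin n)) (z : ℝ)
    (hQsymm : ∀ k l, Q k l = Q l k) (hij : i ≠ j)
    (hiS : i ∉ S) (hjS : j ∉ S) (hsemi : ∀ k ∈ S, Q i k = Q j k)
    (x : Fin n → ℝ) (hx : IsBinary x)
    (hxi : x i = 0) (hxj : x j = 1) :
    energy (modQ Q i j S z) (Fin.snoc x 0) = energy Q x + z - ∑ k ∈ S, Q i k * x k := by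
  classical
  have hMcore : ∀ k l : Fin n,
      modQ Q i j S z k.castSucc l.castSucc = modCore Q i j S z k l := by
    intro k l
    rw [modQ, dif_neg (ne_of_lt (Fin.castSucc_lt_last k)),
      dif_neg (ne_of_lt (Fin.castSucc_lt_last l)), Fin.castPred_castSucc, Fin.castPred_castSucc]
  rw [energy_snoc_zero]
  simp only [hMcore]
  -- diagonal part
  have hdiag : ∑ k, modCore Q i j S z k k * x k = (∑ k, Q k k * x k) + z := by
    have hpt : ∀ k : Fin n,
        modCore Q i j S z k k * x k = Q k k * x k + (if k = j then z else 0) := by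
      intro k
      by_cases hki : k = i
      · rw [hki]; simp [modCore, hxi, hij]
      by_cases hkj : k = j
      · rw [hkj]; simp [modCore, hxj, Ne.symm hij]
      · simp [modCore, hki, hkj]
    rw [Finset.sum_congr rfl fun k _ => hpt k, Finset.sum_add_distrib,
      Finset.sum_ite_eq' Finset.univ j (fun _ => z), if_pos (Finset.mem_univ j)]
  -- off-diagonal part
  have hoff : (∑ k, ∑ l, if k < l then modCore Q i j S z k l * x k * x l else 0)
      = (∑ k, ∑ l, if k < l then Q k l * x k * x l else 0) - ∑ k ∈ S, Q i k * x k := by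
    have hpt : ∀ k l : Fin n,
        (if k < l then modCore Q i j S z k l * x k * x l else 0)
        = (if k < l then Q k l * x k * x l else 0)
          + (if k = j then (if l ∈ S ∧ j < l then -(Q i l * x l) else 0) else 0)
          + (if l = j then (if k ∈ S ∧ k < j then -(Q i k * x k) else 0) else 0) := by
      intro k l
      by_cases hkl : k < l
      · have hne : k ≠ l := ne_of_lt hkl
        simp only [if_pos hkl]
        by_cases hki : k = i
        · have hlj2 : (if l = j then (if k ∈ S ∧ k < j then -(Q i k * x k) else 0) else 0)
              = 0 := by
            split_ifs with h1 h2
            · exact absurd h2.1 (hki ▸ hiS)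
            · rfl
            · rfl
          rw [hlj2, hki]
          simp [hxi, hij]
        by_cases hli : l = i
        · rw [hli]
          simp [hxi, hij, hiS]
        by_cases hkj : k = j
        · have hlj : l ≠ j := fun h => hne (hkj.trans h.symm)
          have hjl : j < l := hkj ▸ hkl
          rw [hkj]
          by_cases hlS : l ∈ S
          · have hQ : Q j l = Q i l := (hsemi l hlS).symm
            simp [modCore, Ne.symm hij, hlj, hli, hlS, hjl, hxj, hQ]
          · simp [modCore, Ne.symm hij, hlj, hli, hlS, hjS, hxj]
        by_cases hlj : l = j
        · have hkjlt : k < j := hlj ▸ hkl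
          rw [hlj]
          by_cases hkS : k ∈ S
          · have hQ : Q k j = Q i k := (hQsymm k j).trans (hsemi k hkS).symm
            simp [modCore, hki, hkj, hkS, hkjlt, hxj, hQ, hij]
          · simp [modCore, hki, hkj, hkS, hij, hxj]
        · simp [modCore, hki, hkj, hli, hlj]
      · simp only [if_neg hkl]
        have h1 : (if k = j then (if l ∈ S ∧ j < l then -(Q i l * x l) else 0) else 0) = 0 := by
          split_ifs with ha hb
          · exact absurd (ha ▸ hb.2 : k < l) hkl
          · rfl
          · rfl
        have h2 : (if l = j then (if k ∈ S ∧ k < j then -(Q i k * x k) else 0) else 0) = 0 := by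
          split_ifs with ha hb
          · exact absurd (ha ▸ hb.2 : k < l) hkl
          · rfl
          · rfl
        rw [h1, h2]; ring
    rw [Finset.sum_congr rfl fun k _ => Finset.sum_congr rfl fun l _ => hpt k l]
    simp only [Finset.sum_add_distrib]
    have hB : (∑ k : Fin n, ∑ l : Fin n,
        if k = j then (if l ∈ S ∧ j < l then -(Q i l * x l) else 0) else 0)
        = - ∑ l ∈ S.filter (fun l => j < l), Q i l * x l := by
      have : ∀ k : Fin n, (∑ l : Fin n,
          if k = j then (if l ∈ S ∧ j < l then -(Q i l * x l) else 0) else 0)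
          = if k = j then (∑ l : Fin n, if l ∈ S ∧ j < l then -(Q i l * x l) else 0) else 0 := by
        intro k; split_ifs with h <;> simp [h]
      rw [Finset.sum_congr rfl fun k _ => this k,
        Finset.sum_ite_eq' Finset.univ j, if_pos (Finset.mem_univ j)]
      rw [← Finset.sum_filter]
      have hfe : Finset.filter (fun a => a ∈ S ∧ j < a) Finset.univ
          = Finset.filter (fun a => j < a) S := by
        ext a; simp
      rw [hfe, ← Finset.sum_neg_distrib]
    have hC : (∑ k : Fin n, ∑ l : Fin n,
        if l = j then (if k ∈ S ∧ k < j then -(Q i k * x k) else 0) else 0)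
        = - ∑ k ∈ S.filter (fun k => k < j), Q i k * x k := by
      have : ∀ k : Fin n, (∑ l : Fin n,
          if l = j then (if k ∈ S ∧ k < j then -(Q i k * x k) else 0) else 0)
          = if k ∈ S ∧ k < j then -(Q i k * x k) else 0 := by
        intro k
        rw [Finset.sum_ite_eq' Finset.univ j, if_pos (Finset.mem_univ j)]
      rw [Finset.sum_congr rfl fun k _ => this k, ← Finset.sum_filter]
      have hfe : Finset.filter (fun a => a ∈ S ∧ a < j) Finset.univ
          = Finset.filter (fun a => a < j) S := by
        ext a; simp
      rw [hfe, ← Finset.sum_neg_distrib]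
    rw [hB, hC]
    have hsplit : (∑ k ∈ S.filter (fun k => k < j), Q i k * x k)
        + (∑ k ∈ S.filter (fun k => j < k), Q i k * x k) = ∑ k ∈ S, Q i k * x k := by
      rw [← Finset.sum_filter_add_sum_filter_not S (fun k => k < j) (fun k => Q i k * x k)]
      congr 1
      apply Finset.sum_congr _ fun _ _ => rfl
      apply Finset.filter_congr
      intro k hk
      have hkj : k ≠ j := fun h => hjS (h ▸ hk)
      constructor
      · intro h h'; exact absurd h (not_lt.2 h'.le)
      · intro h; exact lt_of_le_of_ne (not_lt.1 h) (Ne.symm hkj)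
    linarith [hsplit]
  rw [hdiag, hoff]
  unfold energy
  ring
end

section
/- Let Q be a symmetric real n×n matrix, i ≠ j indices, S a semi-symmetry set for (i,j), z a real number, and Q_mod the modified (n+1)×(n+1) matrix. For every binary vector x ∈ {0,1}^n with x_i = 0 and x_j = 1, the energy of the extended vector (x,1) with ancilla value 1 satisfies H_{Q_mod}((x,1)) = H_Q(x). -/
open Finset

/-- for binary `x` with `x i = 0` and `x j = 1`, extending by ancilla
value `1` gives `H_{Q_mod}((x,1)) = energy Q x`. -/
theorem stmt5
    {n : ℕ} (Q : Fin n → Fin n → ℝ) (i j : Fin n) (S : Finset (Fin n)) (z : ℝ)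
    (hQsymm : ∀ k l, Q k l = Q l k) (hij : i ≠ j)
    (hiS : i ∉ S) (hjS : j ∉ S) (hsemi : ∀ k ∈ S, Q i k = Q j k)
    (x : Fin n → ℝ) (hx : IsBinary x)
    (hxi : x i = 0) (hxj : x j = 1) :
    energy (modQ Q i j S z) (Fin.snoc x 1) = energy Q x := by
  have hcc : ∀ k l : Fin n, modQ Q i j S z k.castSucc l.castSucc = modCore Q i j S z k l := by
    intro k l
    simp [modQ, (Fin.castSucc_lt_last k).ne, (Fin.castSucc_lt_last l).ne]
  have hcl : ∀ k : Fin n, modQ Q i j S z k.castSucc (Fin.last n) = modCol Q i j S z k := by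
    intro k; simp [modQ, (Fin.castSucc_lt_last k).ne]
  have hll : modQ Q i j S z (Fin.last n) (Fin.last n) = z := by simp [modQ]
  have hnl : ∀ l : Fin n, ¬ Fin.last n < Fin.castSucc l := fun l => (Fin.castSucc_lt_last l).asymm
  rw [energy, energy]
  simp only [Fin.sum_univ_castSucc, Fin.snoc_castSucc, Fin.snoc_last, hcc, hcl, hll,
    Fin.castSucc_lt_castSucc_iff, Fin.castSucc_lt_last, if_true, lt_irrefl, if_false, hnl,
    Finset.sum_const_zero, mul_one, add_zero]
  rw [Finset.sum_add_distrib]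
  -- diagonal part
  have h1 : ∑ k, modCore Q i j S z k k * x k = (∑ k, Q k k * x k) + z := by
    have hpt : ∀ k : Fin n, modCore Q i j S z k k * x k
        = Q k k * x k + ((if k = i then z * x k else 0) + (if k = j then z * x k else 0)) := by
      intro k
      unfold modCore
      split_ifs <;> simp_all <;> ring
    rw [Finset.sum_congr rfl (fun k _ => hpt k), Finset.sum_add_distrib, Finset.sum_add_distrib,
      Finset.sum_ite_eq' Finset.univ i, Finset.sum_ite_eq' Finset.univ j]
    simp [hxi, hxj]
  -- ancilla column part
  have h2 : ∑ k, modCol Q i j S z k * x k = -2 * z + ∑ k ∈ S, Q i k * x k := by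
    have hpt : ∀ k : Fin n, modCol Q i j S z k * x k
        = (if k = i then -2 * z * x k else 0) + (if k = j then -2 * z * x k else 0)
          + (if k ∈ S then Q i k * x k else 0) := by
      intro k
      unfold modCol
      split_ifs <;> simp_all <;> ring
    rw [Finset.sum_congr rfl (fun k _ => hpt k), Finset.sum_add_distrib, Finset.sum_add_distrib,
      Finset.sum_ite_eq' Finset.univ i, Finset.sum_ite_eq' Finset.univ j,
      ← Finset.sum_filter, Finset.filter_mem_eq_inter, Finset.univ_inter]
    simp [hxi, hxj]
  -- core off-diagonal part
  have h3 : ∑ k, ∑ l, (if k < l then modCore Q i j S z k l * x k * x l else 0)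
      = (∑ k, ∑ l, if k < l then Q k l * x k * x l else 0) - ∑ k ∈ S, Q i k * x k := by
    have hpt : ∀ k l : Fin n, (if k < l then modCore Q i j S z k l * x k * x l else 0)
        = (if k < l then Q k l * x k * x l else 0)
          - (if k = j then (if j < l ∧ l ∈ S then Q i l * x l else 0) else 0)
          - (if l = j then (if k < j ∧ k ∈ S then Q i k * x k else 0) else 0) := by
      intro k l
      by_cases hkl : k < l
      · have hne : k ≠ l := ne_of_lt hkl
        simp only [hkl, if_true]
        by_cases hki : k = i
        · have hli : l ≠ i := fun h => hne (hki.trans h.symm)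
          simp [modCore, hki, hxi, hij, hiS, hli]
        · by_cases hli : l = i
          · simp [modCore, hli, hxi, hij, hiS, hki, hne]
          · by_cases hkj : k = j
            · have hlj : l ≠ j := fun h => hne (hkj.trans h.symm)
              have hjl : j < l := hkj ▸ hkl
              by_cases hlS : l ∈ S
              · simp [modCore, hkj, hli, hlj, hxj, hjl, hlS, hij, Ne.symm hij]
                rw [hsemi l hlS]; ring
              · simp [modCore, hkj, hli, hlj, hlS, hij, Ne.symm hij]
            · by_cases hlj : l = j
              · have hkj' : k < j := hlj ▸ hkl
                by_cases hkS : k ∈ S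
                · simp [modCore, hki, hkj, hlj, hxj, hkj', hkS, hij, Ne.symm hij]
                  rw [hQsymm k j, ← hsemi k hkS]; ring
                · simp [modCore, hki, hkj, hlj, hkS, hij, Ne.symm hij]
              · simp [modCore, hki, hkj, hli, hlj]
      · simp only [hkl, if_false]
        have c1 : (if k = j then (if j < l ∧ l ∈ S then Q i l * x l else 0) else 0) = 0 := by
          split_ifs with h h'
          · exact absurd (h ▸ h'.1) hkl
          · rfl
          · rfl
        have c2 : (if l = j then (if k < j ∧ k ∈ S then Q i k * x k else 0) else 0) = 0 := by
          split_ifs with h h'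
          · exact absurd (h ▸ h'.1) hkl
          · rfl
          · rfl
        rw [c1, c2]; ring
    rw [Finset.sum_congr rfl (fun k _ => Finset.sum_congr rfl (fun l _ => hpt k l))]
    simp only [Finset.sum_sub_distrib]
    have hc1 : ∑ k : Fin n, ∑ l : Fin n,
        (if k = j then (if j < l ∧ l ∈ S then Q i l * x l else 0) else 0)
        = ∑ l : Fin n, (if j < l ∧ l ∈ S then Q i l * x l else 0) := by
      have : ∀ k : Fin n, (∑ l : Fin n, if k = j then (if j < l ∧ l ∈ S then Q i l * x l else 0) else 0)
          = (if k = j then ∑ l : Fin n, (if j < l ∧ l ∈ S then Q i l * x l else 0) else 0) := by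
        intro k; split <;> simp
      rw [Finset.sum_congr rfl (fun k _ => this k), Finset.sum_ite_eq' Finset.univ j]
      simp
    have hc2 : ∑ k : Fin n, ∑ l : Fin n,
        (if l = j then (if k < j ∧ k ∈ S then Q i k * x k else 0) else 0)
        = ∑ k : Fin n, (if k < j ∧ k ∈ S then Q i k * x k else 0) := by
      refine Finset.sum_congr rfl (fun k _ => ?_)
      rw [Finset.sum_ite_eq' Finset.univ j]
      simp
    rw [hc1, hc2]
    have e1 : ∑ l : Fin n, (if j < l ∧ l ∈ S then Q i l * x l else 0)
        = ∑ l ∈ S, (if j < l then Q i l * x l else 0) := by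
      have hp : ∀ l : Fin n, (if j < l ∧ l ∈ S then Q i l * x l else 0)
          = (if l ∈ S then (if j < l then Q i l * x l else 0) else 0) := by
        intro l; split_ifs <;> simp_all
      rw [Finset.sum_congr rfl fun l _ => hp l, Finset.sum_ite_mem, Finset.univ_inter]
    have e2 : ∑ k : Fin n, (if k < j ∧ k ∈ S then Q i k * x k else 0)
        = ∑ k ∈ S, (if k < j then Q i k * x k else 0) := by
      have hp : ∀ k : Fin n, (if k < j ∧ k ∈ S then Q i k * x k else 0)
          = (if k ∈ S then (if k < j then Q i k * x k else 0) else 0) := by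
        intro k; split_ifs <;> simp_all
      rw [Finset.sum_congr rfl fun k _ => hp k, Finset.sum_ite_mem, Finset.univ_inter]
    rw [e1, e2]
    have key : (∑ l ∈ S, (if j < l then Q i l * x l else 0))
        + (∑ k ∈ S, (if k < j then Q i k * x k else 0)) = ∑ k ∈ S, Q i k * x k := by
      rw [← Finset.sum_add_distrib]
      refine Finset.sum_congr rfl fun k hk => ?_
      have hkj : k ≠ j := fun h => hjS (h ▸ hk)
      rcases lt_or_gt_of_ne hkj with h | h
      · simp [h, h.asymm]
      · simp [h, h.asymm]
    linarith
  rw [h1, h2, h3]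
  ring
end

section
/- Let Q be a symmetric real n×n matrix, i ≠ j indices, S a semi-symmetry set for (i,j), z a real number, and Q_mod the modified (n+1)×(n+1) matrix. For every binary vector x ∈ {0,1}^n with x_i = 1 and x_j = 1, the energy of the extended vector (x,0) with ancilla value 0 satisfies H_{Q_mod}((x,0)) = H_Q(x) + 4z − 2σ(x). -/
open Finset

lemma pair_sum' {m : ℕ} (g : Fin m → Fin m → ℝ) :
    ((∑ k, ∑ l, if k < l then g k l else 0) + ∑ k, ∑ l, if k < l then g l k else 0)
      = (∑ k, ∑ l, g k l) - ∑ k, g k k := by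
  have h2 : (∑ k, ∑ l, if k < l then g l k else 0)
      = ∑ k, ∑ l, if l < k then g k l else 0 := Finset.sum_comm
  rw [h2, ← Finset.sum_add_distrib, ← Finset.sum_sub_distrib]
  refine Finset.sum_congr rfl fun k _ => ?_
  rw [← Finset.sum_add_distrib]
  have key : ∀ l : Fin m, ((if k < l then g k l else 0) + (if l < k then g k l else 0))
      = g k l - (if l = k then g k l else 0) := by
    intro l
    rcases lt_trichotomy k l with h|h|h
    · simp [h, asymm h, h.ne']
    · simp [h]
    · simp [h, asymm h, h.ne]
  rw [Finset.sum_congr rfl (fun l _ => key l), Finset.sum_sub_distrib,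
    Finset.sum_ite_eq' Finset.univ k (fun l => g k l), if_pos (Finset.mem_univ k)]

/-- for binary `x` with `x i = 1` and `x j = 1`, extending by ancilla
value `0` gives `H_{Q_mod}((x,0)) = energy Q x + 4 * z - 2 * (∑ k ∈ S, Q i k * x k)`. -/
theorem stmt6
    {n : ℕ} (Q : Fin n → Fin n → ℝ) (i j : Fin n) (S : Finset (Fin n)) (z : ℝ)
    (hQsymm : ∀ k l, Q k l = Q l k) (hij : i ≠ j)
    (hiS : i ∉ S) (hjS : j ∉ S) (hsemi : ∀ k ∈ S, Q i k = Q j k)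
    (x : Fin n → ℝ) (hx : IsBinary x)
    (hxi : x i = 1) (hxj : x j = 1) :
    energy (modQ Q i j S z) (Fin.snoc x 0) = energy Q x + 4 * z - 2 * (∑ k ∈ S, Q i k * x k) := by
  -- Step 1: reduce to modCore
  have step1 : energy (modQ Q i j S z) (Fin.snoc x 0) = energy (modCore Q i j S z) x := by
    have hne : ∀ k : Fin n, (k.castSucc : Fin (n+1)) ≠ Fin.last n :=
      fun k => (Fin.castSucc_lt_last k).ne
    have hnl : ∀ k : Fin (n+1), ¬ (Fin.last n < k) := fun k => not_lt.mpr (Fin.le_last k)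
    unfold energy
    simp only [Fin.sum_univ_castSucc]
    simp [modQ, hne, hnl, Fin.snoc_castSucc, Fin.snoc_last, Fin.castSucc_lt_castSucc_iff,
      Fin.castPred_castSucc]
  rw [step1]
  -- pointwise off-diagonal decomposition
  have hoff : ∀ k l : Fin n, k ≠ l → modCore Q i j S z k l =
      Q k l + (if (k = i ∧ l = j) ∨ (k = j ∧ l = i) then 2*z else 0)
        - (if (k = i ∨ k = j) ∧ l ∈ S then Q k l else 0)
        - (if (l = i ∨ l = j) ∧ k ∈ S then Q k l else 0) := by
    intro k l hkl
    unfold modCore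
    by_cases hki : k = i
    · subst hki
      have hli : l ≠ k := hkl.symm
      by_cases hlj : l = j
      · subst hlj; simp [hij, hli, hiS, hjS]
      · by_cases hlS : l ∈ S <;> simp [hij, hli, hlj, hlS, hiS]
    · by_cases hkj : k = j
      · subst hkj
        have hlj : l ≠ k := hkl.symm
        by_cases hli : l = i
        · subst hli; simp [hij, hki, hlj, hiS, hjS, hQsymm l k]
        · by_cases hlS : l ∈ S <;> simp [hij, hki, hli, hlj, hlS, hjS]
      · by_cases hli : l = i
        · subst hli
          by_cases hkS : k ∈ S <;> simp [hki, hkj, hkS, hiS, Ne.symm hij]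
        · by_cases hlj : l = j
          · subst hlj
            by_cases hkS : k ∈ S <;> simp [hki, hkj, hkS, hjS, hli]
          · simp [hki, hkj, hli, hlj]
  -- diagonal
  have hdiag : ∀ k : Fin n, modCore Q i j S z k k
      = Q k k + (if k = i then z else 0) + (if k = j then z else 0) := by
    intro k
    unfold modCore
    by_cases hki : k = i
    · subst hki; simp [hij]
    · by_cases hkj : k = j
      · subst hkj; simp [hki, Ne.symm hij]
      · simp [hki, hkj, hiS, hjS]
  have hdsum : ∑ k, modCore Q i j S z k k * x k = (∑ k, Q k k * x k) + 2*z := by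
    simp only [hdiag, add_mul, ite_mul, zero_mul]
    rw [Finset.sum_add_distrib, Finset.sum_add_distrib,
      Finset.sum_ite_eq' Finset.univ i (fun k => z * x k),
      Finset.sum_ite_eq' Finset.univ j (fun k => z * x k)]
    simp [hxi, hxj]
    ring
  -- auxiliary functions
  set h : Fin n → Fin n → ℝ := fun k l => (if k = i ∧ l = j then 2*z else 0) * x k * x l with hh
  set g : Fin n → Fin n → ℝ :=
    fun k l => (if (k = i ∨ k = j) ∧ l ∈ S then Q k l else 0) * x k * x l with hg
  have hpt : ∀ k l : Fin n, (if k < l then modCore Q i j S z k l * x k * x l else 0)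
      = (if k < l then Q k l * x k * x l else 0)
        + (if k < l then h k l else 0) + (if k < l then h l k else 0)
        - (if k < l then g k l else 0) - (if k < l then g l k else 0) := by
    intro k l
    by_cases hkl : k < l
    · simp only [if_pos hkl]
      rw [hoff k l hkl.ne, hh, hg]
      by_cases c1 : k = i ∧ l = j
      · obtain ⟨hki, hlj⟩ := c1
        subst hki; subst hlj
        simp [hij, Ne.symm hij, hiS, hjS]
        ring
      · by_cases c2 : k = j ∧ l = i
        · obtain ⟨hkj, hli⟩ := c2
          subst hkj; subst hli
          simp [hij, Ne.symm hij, hiS, hjS, c1]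
          ring
        · have c2' : ¬ (l = i ∧ k = j) := fun ⟨a, b⟩ => c2 ⟨b, a⟩
          have cA : ¬ ((k = i ∧ l = j) ∨ (k = j ∧ l = i)) := by tauto
          simp only []
          rw [if_neg cA, if_neg c1, if_neg c2']
          by_cases cB : (k = i ∨ k = j) ∧ l ∈ S <;>
            by_cases cC : (l = i ∨ l = j) ∧ k ∈ S
          · simp only [if_pos cB, if_pos cC, hQsymm l k]; ring
          · simp only [if_pos cB, if_neg cC]; ring
          · simp only [if_neg cB, if_pos cC, hQsymm l k]; ring
          · simp only [if_neg cB, if_neg cC]; ring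
    · simp [hkl]
  -- sums of h
  have sum_h : (∑ k, ∑ l, h k l) = 2*z := by
    have hrow : ∀ k, (∑ l, h k l) = if k = i then 2*z*x j else 0 := by
      intro k
      rw [hh]
      by_cases hk : k = i
      · subst hk
        simp [ite_and, ite_mul, zero_mul, Finset.sum_ite_eq' Finset.univ j, hxi]
      · simp [hk]
    rw [Finset.sum_congr rfl fun k _ => hrow k,
      Finset.sum_ite_eq' Finset.univ i (fun _ => 2*z*x j)]
    simp [hxj]
  have diag_h : (∑ k, h k k) = 0 := by
    refine Finset.sum_eq_zero fun k _ => ?_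
    rw [hh]
    by_cases hk : k = i
    · subst hk; simp [hij]
    · simp [hk]
  -- sums of g
  have sum_g : (∑ k, ∑ l, g k l) = 2 * (∑ k ∈ S, Q i k * x k) := by
    have point : ∀ k l : Fin n, g k l
        = (if k = i then (if l ∈ S then Q k l * x k * x l else 0) else 0)
          + (if k = j then (if l ∈ S then Q k l * x k * x l else 0) else 0) := by
      intro k l
      rw [hg]
      by_cases hki : k = i
      · subst hki
        by_cases hlS : l ∈ S <;> simp [hij, hlS] <;> ring
      · by_cases hkj : k = j
        · subst hkj
          by_cases hlS : l ∈ S <;> simp [hki, hlS] <;> ring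
        · simp [hki, hkj]
    have inner : ∀ k : Fin n, (∑ l, g k l)
        = (if k = i then (∑ l, if l ∈ S then Q k l * x k * x l else 0) else 0)
          + (if k = j then (∑ l, if l ∈ S then Q k l * x k * x l else 0) else 0) := by
      intro k
      rw [Finset.sum_congr rfl fun l _ => point k l, Finset.sum_add_distrib]
      by_cases hki : k = i <;> by_cases hkj : k = j <;> simp [hki, hkj]
    rw [Finset.sum_congr rfl fun k _ => inner k, Finset.sum_add_distrib,
      Finset.sum_ite_eq' Finset.univ i
        (fun k => ∑ l, if l ∈ S then Q k l * x k * x l else 0),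
      Finset.sum_ite_eq' Finset.univ j
        (fun k => ∑ l, if l ∈ S then Q k l * x k * x l else 0)]
    simp only [Finset.mem_univ, if_pos, Finset.sum_ite_mem, Finset.univ_inter]
    have : (∑ l ∈ S, Q j l * x j * x l) = ∑ l ∈ S, Q i l * x i * x l :=
      Finset.sum_congr rfl fun l hl => by rw [← hsemi l hl, hxi, hxj]
    rw [this]
    rw [Finset.mul_sum]
    rw [← Finset.sum_add_distrib]
    exact Finset.sum_congr rfl fun l hl => by rw [hxi]; ring
  have diag_g : (∑ k, g k k) = 0 := by
    refine Finset.sum_eq_zero fun k _ => ?_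
    rw [hg]
    by_cases hki : k = i
    · subst hki; simp [hiS]
    · by_cases hkj : k = j
      · subst hkj; simp [hjS]
      · simp [hki, hkj]
  -- off-diagonal sum
  have hosum : (∑ k, ∑ l, if k < l then modCore Q i j S z k l * x k * x l else 0)
      = (∑ k, ∑ l, if k < l then Q k l * x k * x l else 0)
        + 2*z - 2*(∑ k ∈ S, Q i k * x k) := by
    rw [show (∑ k, ∑ l, if k < l then modCore Q i j S z k l * x k * x l else 0)
        = ∑ k, ∑ l, ((if k < l then Q k l * x k * x l else 0)
          + (if k < l then h k l else 0) + (if k < l then h l k else 0)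
          - (if k < l then g k l else 0) - (if k < l then g l k else 0)) from
      Finset.sum_congr rfl fun k _ => Finset.sum_congr rfl fun l _ => hpt k l]
    simp only [Finset.sum_add_distrib, Finset.sum_sub_distrib]
    linarith [pair_sum' h, pair_sum' g, sum_h, diag_h, sum_g, diag_g]
  unfold energy
  linarith [hdsum, hosum]
end

section
/- Let Q be a symmetric real n×n matrix, i ≠ j indices, S a semi-symmetry set for (i,j), z a real number, and Q_mod the modified (n+1)×(n+1) matrix. For every binary vector x ∈ {0,1}^n with x_i = 1 and x_j = 1, the energy of the extended vector (x,1) with ancilla value 1 satisfies H_{Q_mod}((x,1)) = H_Q(x) + z − σ(x). -/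
open Finset

-- symmetrization lemma
lemma sym_energy {m : ℕ} (M : Fin m → Fin m → ℝ) (y : Fin m → ℝ)
    (hsym : ∀ k l, M k l = M l k) :
    energy M y = ∑ k, M k k * y k +
      (∑ k, ∑ l, M k l * y k * y l - ∑ k, M k k * y k * y k) / 2 := by
  have hswap : (∑ k, ∑ l, if l < k then M k l * y k * y l else 0)
      = ∑ k, ∑ l, if k < l then M k l * y k * y l else 0 := by
    rw [Finset.sum_comm]
    refine Finset.sum_congr rfl fun k _ => Finset.sum_congr rfl fun l _ => ?_
    by_cases h : k < l <;> simp [h]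
    rw [hsym]; ring
  have key : ∑ k, ∑ l, M k l * y k * y l
      = (∑ k, ∑ l, if k < l then M k l * y k * y l else 0)
        + ((∑ k, ∑ l, if l < k then M k l * y k * y l else 0)
        + ∑ k, M k k * y k * y k) := by
    have hpt : ∀ k l : Fin m, M k l * y k * y l
        = (if k < l then M k l * y k * y l else 0)
          + ((if l < k then M k l * y k * y l else 0)
          + (if k = l then M k l * y k * y l else 0)) := by
      intro k l
      rcases lt_trichotomy k l with h | h | h
      · simp [h, h.ne, not_lt.2 h.le]
      · simp [h, lt_irrefl]
      · simp [h, h.ne', not_lt.2 h.le]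
    calc ∑ k, ∑ l, M k l * y k * y l
        = ∑ k, ∑ l, ((if k < l then M k l * y k * y l else 0)
          + ((if l < k then M k l * y k * y l else 0)
          + (if k = l then M k l * y k * y l else 0))) := by
          exact Finset.sum_congr rfl fun k _ => Finset.sum_congr rfl fun l _ => hpt k l
      _ = _ := by
          simp only [Finset.sum_add_distrib]
          congr 2
          refine Finset.sum_congr rfl fun k _ => ?_
          simp [Finset.sum_ite_eq]
  rw [hswap] at key
  rw [energy]
  linarith [key]

lemma sum_pair_eq {n : ℕ} (f : Fin n → Fin n → ℝ) (a b : Fin n) :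
    ∑ k, ∑ l, (if k = a ∧ l = b then f k l else 0) = f a b := by
  have h : ∀ k : Fin n, ∑ l, (if k = a ∧ l = b then f k l else 0)
      = if k = a then f a b else 0 := by
    intro k
    by_cases h : k = a
    · subst h; simp
    · simp [h]
  rw [Finset.sum_congr rfl fun k _ => h k]
  simp

lemma sum_pair_memR {n : ℕ} (f : Fin n → Fin n → ℝ) (a : Fin n) (S : Finset (Fin n)) :
    ∑ k, ∑ l, (if k = a ∧ l ∈ S then f k l else 0) = ∑ l ∈ S, f a l := by
  have h : ∀ k : Fin n, ∑ l, (if k = a ∧ l ∈ S then f k l else 0)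
      = if k = a then ∑ l ∈ S, f a l else 0 := by
    intro k
    by_cases h : k = a
    · subst h; simp
    · simp [h]
  rw [Finset.sum_congr rfl fun k _ => h k]
  simp

lemma sum_pair_memL {n : ℕ} (f : Fin n → Fin n → ℝ) (a : Fin n) (S : Finset (Fin n)) :
    ∑ k, ∑ l, (if l = a ∧ k ∈ S then f k l else 0) = ∑ k ∈ S, f k a := by
  have h : ∀ k : Fin n, ∑ l, (if l = a ∧ k ∈ S then f k l else 0)
      = if k ∈ S then f k a else 0 := by
    intro k
    by_cases h : k ∈ S
    · simp [h]
    · simp [h]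
  rw [Finset.sum_congr rfl fun k _ => h k]
  simp

section
variable {n : ℕ} (Q : Fin n → Fin n → ℝ) (i j : Fin n) (S : Finset (Fin n)) (z : ℝ)

lemma modQ_cc (k l : Fin n) :
    modQ Q i j S z k.castSucc l.castSucc = modCore Q i j S z k l := by
  simp [modQ, (Fin.castSucc_lt_last k).ne, (Fin.castSucc_lt_last l).ne]

lemma modQ_cl (k : Fin n) :
    modQ Q i j S z k.castSucc (Fin.last n) = modCol Q i j S z k := by
  simp [modQ, (Fin.castSucc_lt_last k).ne]

lemma modQ_lc (k : Fin n) :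
    modQ Q i j S z (Fin.last n) k.castSucc = modCol Q i j S z k := by
  simp [modQ, (Fin.castSucc_lt_last k).ne]

lemma modQ_ll : modQ Q i j S z (Fin.last n) (Fin.last n) = z := by simp [modQ]

lemma modCore_symm (hQsymm : ∀ k l, Q k l = Q l k) (k l : Fin n) :
    modCore Q i j S z k l = modCore Q i j S z l k := by
  unfold modCore
  by_cases h1 : k = i <;> by_cases h2 : k = j <;> by_cases h3 : l = i <;>
    by_cases h4 : l = j <;> by_cases h5 : k ∈ S <;> by_cases h6 : l ∈ S <;>
    simp_all

lemma modQ_symm (hQsymm : ∀ k l, Q k l = Q l k) (a b : Fin (n+1)) :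
    modQ Q i j S z a b = modQ Q i j S z b a := by
  unfold modQ
  by_cases ha : a = Fin.last n <;> by_cases hb : b = Fin.last n <;>
    simp [ha, hb, modCore_symm Q i j S z hQsymm]

end

section Esums
variable {n : ℕ} (Q : Fin n → Fin n → ℝ) (i j : Fin n) (S : Finset (Fin n)) (z : ℝ)
  (hij : i ≠ j) (hiS : i ∉ S) (hjS : j ∉ S)
  (x : Fin n → ℝ) (hxi : x i = 1) (hxj : x j = 1)

include hij hxi hxj in
lemma E_diag : ∑ k, modCore Q i j S z k k * x k = ∑ k, Q k k * x k + 2 * z := by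
  have hpt : ∀ k, modCore Q i j S z k k * x k
      = Q k k * x k + ((if k = i then z * x k else 0) + (if k = j then z * x k else 0)) := by
    intro k
    by_cases h1 : k = i
    · subst h1; simp [modCore, hij]; ring
    · by_cases h2 : k = j
      · subst h2; simp [modCore, h1, Ne.symm hij, hij]; ring
      · simp [modCore, h1, h2]
  rw [Finset.sum_congr rfl fun k _ => hpt k]
  simp [Finset.sum_add_distrib, hxi, hxj]
  ring

include hij hiS hjS hxi hxj in
lemma E_col : ∑ k, modCol Q i j S z k * x k = -(4 * z) + ∑ k ∈ S, Q i k * x k := by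
  have hpt : ∀ k, modCol Q i j S z k * x k
      = (if k = i then -2 * z * x k else 0) + ((if k = j then -2 * z * x k else 0)
        + (if k ∈ S then Q i k * x k else 0)) := by
    intro k
    by_cases h1 : k = i
    · subst h1; simp [modCol, hij, hiS]
    · by_cases h2 : k = j
      · subst h2; simp [modCol, h1, hjS]
      · by_cases h3 : k ∈ S <;> simp [modCol, h1, h2, h3]
  rw [Finset.sum_congr rfl fun k _ => hpt k]
  simp [Finset.sum_add_distrib, hxi, hxj]
  ring

include hij hiS hjS hxi hxj in
lemma E_core (hQsymm : ∀ k l, Q k l = Q l k) (hsemi : ∀ k ∈ S, Q i k = Q j k) :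
    ∑ k, ∑ l, modCore Q i j S z k l * x k * x l
      = ∑ k, ∑ l, Q k l * x k * x l + 6 * z - 4 * ∑ k ∈ S, Q i k * x k := by
  have hpt : ∀ k l, modCore Q i j S z k l * x k * x l
      = Q k l * x k * x l
        + ((if k = i ∧ l = i then z * x k * x l else 0)
        + ((if k = j ∧ l = j then z * x k * x l else 0)
        + ((if k = i ∧ l = j then 2 * z * x k * x l else 0)
        + ((if k = j ∧ l = i then 2 * z * x k * x l else 0)
        + ((if k = i ∧ l ∈ S then -(Q k l * x k * x l) else 0)
        + ((if k = j ∧ l ∈ S then -(Q k l * x k * x l) else 0)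
        + ((if l = i ∧ k ∈ S then -(Q k l * x k * x l) else 0)
        + (if l = j ∧ k ∈ S then -(Q k l * x k * x l) else 0)))))))) := by
    intro k l
    by_cases h1 : k = i <;> by_cases h2 : k = j <;> by_cases h3 : l = i <;>
      by_cases h4 : l = j <;> by_cases h5 : k ∈ S <;> by_cases h6 : l ∈ S <;>
      simp_all [modCore]
  rw [Finset.sum_congr rfl fun k _ => Finset.sum_congr rfl fun l _ => hpt k l]
  simp only [Finset.sum_add_distrib]
  rw [sum_pair_eq (fun k l => z * x k * x l) i i,
    sum_pair_eq (fun k l => z * x k * x l) j j,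
    sum_pair_eq (fun k l => 2 * z * x k * x l) i j,
    sum_pair_eq (fun k l => 2 * z * x k * x l) j i,
    sum_pair_memR (fun k l => -(Q k l * x k * x l)) i S,
    sum_pair_memR (fun k l => -(Q k l * x k * x l)) j S,
    sum_pair_memL (fun k l => -(Q k l * x k * x l)) i S,
    sum_pair_memL (fun k l => -(Q k l * x k * x l)) j S]
  have h1 : ∑ l ∈ S, -(Q i l * x i * x l) = -∑ k ∈ S, Q i k * x k := by
    rw [← Finset.sum_neg_distrib]
    exact Finset.sum_congr rfl fun l hl => by rw [hxi]; ring
  have h2 : ∑ l ∈ S, -(Q j l * x j * x l) = -∑ k ∈ S, Q i k * x k := by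
    rw [← Finset.sum_neg_distrib]
    refine Finset.sum_congr rfl fun l hl => by rw [hxj, ← hsemi l hl]; ring
  have h3 : ∑ k ∈ S, -(Q k i * x k * x i) = -∑ k ∈ S, Q i k * x k := by
    rw [← Finset.sum_neg_distrib]
    exact Finset.sum_congr rfl fun l hl => by rw [hxi, hQsymm l i]; ring
  have h4 : ∑ k ∈ S, -(Q k j * x k * x j) = -∑ k ∈ S, Q i k * x k := by
    rw [← Finset.sum_neg_distrib]
    refine Finset.sum_congr rfl fun l hl => by
      rw [hxj, hQsymm l j, ← hsemi l hl]; ring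
  rw [h1, h2, h3, h4, hxi, hxj]
  ring
end Esums


/-- for binary `x` with `x i = 1` and `x j = 1`, extending by ancilla
value `1` gives `H_{Q_mod}((x,1)) = energy Q x + z - ∑ k ∈ S, Q i k * x k`. -/
theorem stmt7
    {n : ℕ} (Q : Fin n → Fin n → ℝ) (i j : Fin n) (S : Finset (Fin n)) (z : ℝ)
    (hQsymm : ∀ k l, Q k l = Q l k) (hij : i ≠ j)
    (hiS : i ∉ S) (hjS : j ∉ S) (hsemi : ∀ k ∈ S, Q i k = Q j k)
    (x : Fin n → ℝ) (hx : IsBinary x)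
    (hxi : x i = 1) (hxj : x j = 1) :
    energy (modQ Q i j S z) (Fin.snoc x 1) = energy Q x + z - ∑ k ∈ S, Q i k * x k := by
  set y : Fin (n + 1) → ℝ := Fin.snoc x 1 with hy
  have hsq : ∀ k, x k * x k = x k := by
    intro k; rcases hx k with h | h <;> simp [h]
  have hysq : ∀ a, y a * y a = y a := by
    intro a
    refine Fin.lastCases ?_ ?_ a
    · simp [hy]
    · intro k; simp [hy, hsq k]
  have hyc : ∀ k : Fin n, y k.castSucc = x k := by intro k; simp [hy]
  have hyl : y (Fin.last n) = 1 := by simp [hy]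
  rw [sym_energy (modQ Q i j S z) y (modQ_symm Q i j S z hQsymm),
    sym_energy Q x hQsymm]
  have hdiagQ : ∑ k, Q k k * x k * x k = ∑ k, Q k k * x k := by
    refine Finset.sum_congr rfl fun k _ => by rw [mul_assoc, hsq k]
  have hdiagM2 : ∑ a, modQ Q i j S z a a * y a * y a = ∑ a, modQ Q i j S z a a * y a := by
    refine Finset.sum_congr rfl fun a _ => by rw [mul_assoc, hysq a]
  rw [hdiagQ, hdiagM2]
  have hA1 : ∑ a, modQ Q i j S z a a * y a = ∑ k, Q k k * x k + 3 * z := by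
    rw [Fin.sum_univ_castSucc]
    simp only [modQ_cc, modQ_ll, hyc, hyl, mul_one]
    rw [E_diag Q i j S z hij x hxi hxj]
    ring
  have hA3 : ∑ a, ∑ b, modQ Q i j S z a b * y a * y b
      = ∑ k, ∑ l, Q k l * x k * x l - z - 2 * ∑ k ∈ S, Q i k * x k := by
    rw [Fin.sum_univ_castSucc]
    have hinner : ∀ k : Fin n, ∑ b, modQ Q i j S z k.castSucc b * y k.castSucc * y b
        = (∑ l, modCore Q i j S z k l * x k * x l) + modCol Q i j S z k * x k := by
      intro k
      rw [Fin.sum_univ_castSucc]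
      simp only [modQ_cc, modQ_cl, hyc, hyl, mul_one]
    have hlast : ∑ b, modQ Q i j S z (Fin.last n) b * y (Fin.last n) * y b
        = (∑ l, modCol Q i j S z l * x l) + z := by
      rw [Fin.sum_univ_castSucc]
      simp only [modQ_lc, modQ_ll, hyc, hyl, mul_one, one_mul]
    rw [Finset.sum_congr rfl fun k _ => hinner k, hlast, Finset.sum_add_distrib,
      E_core Q i j S z hij hiS hjS x hxi hxj hQsymm hsemi,
      E_col Q i j S z hij hiS hjS x hxi hxj]
    ring
  rw [hA1, hA3]
  ring
end

section
/- Let Q be a symmetric real n×n matrix, i ≠ j indices, S a semi-symmetry set for (i,j) such that moreover Q[i,j] ≠ 0, Q[i,k] ≠ 0 for every k ∈ S, and Q[i,j] + 2z ≠ 0 with z ≠ 0, and let Q_mod be the modified (n+1)×(n+1) matrix. Then the number of unordered pairs {k,l} with k ≠ l and Q_mod[k,l] ≠ 0 (counted over indices in {1,…,n+1}) equals the number of unordered pairs {k,l} with k ≠ l and Q[k,l] ≠ 0 (over {1,…,n}) minus (|S| − 2). In particular, if |S| ≥ 3 the number of non-zero couplings strictly decreases. -/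
open Finset

/-- Number of (unordered) non-zero couplings of a QUBO matrix: pairs `{k,l}` with `k ≠ l`
and `Q[k,l] ≠ 0`, counted via representatives `k < l` (valid since `Q` is symmetric). -/
noncomputable def couplingCount {m : ℕ} (Q : Fin m → Fin m → ℝ) : ℕ :=
  {p : Fin m × Fin m | p.1 < p.2 ∧ Q p.1 p.2 ≠ 0}.ncard

set_option maxHeartbeats 1000000 in
/-- if `Q[i,j] ≠ 0`, `Q[i,k] ≠ 0` for all `k ∈ S`, `Q[i,j] + 2z ≠ 0` and
`z ≠ 0`, then the number of non-zero couplings of `Q_mod` equals that of `Q` minus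
`(|S| - 2)`; in particular, if `|S| ≥ 3`, the number of couplings strictly decreases. -/
theorem stmt12
    {n : ℕ} (Q : Fin n → Fin n → ℝ) (i j : Fin n) (S : Finset (Fin n)) (z : ℝ)
    (hQsymm : ∀ k l, Q k l = Q l k) (hij : i ≠ j)
    (hiS : i ∉ S) (hjS : j ∉ S) (hsemi : ∀ k ∈ S, Q i k = Q j k)
    (hQij : Q i j ≠ 0) (hQik : ∀ k ∈ S, Q i k ≠ 0)
    (hQijz : Q i j + 2 * z ≠ 0) (hz : z ≠ 0) :
    (couplingCount (modQ Q i j S z) : ℤ) = (couplingCount Q : ℤ) - ((S.card : ℤ) - 2) ∧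
      (3 ≤ S.card → couplingCount (modQ Q i j S z) < couplingCount Q) := by
  classical
  have hcc : ∀ {m : ℕ} (R : Fin m → Fin m → ℝ),
      couplingCount R = (Finset.univ.filter
        (fun p : Fin m × Fin m => p.1 < p.2 ∧ R p.1 p.2 ≠ 0)).card := by
    intro m R
    rw [couplingCount, ← Set.ncard_coe_finset]
    congr 1; ext p; simp
  set A := Finset.univ.filter (fun p : Fin n × Fin n => p.1 < p.2 ∧ Q p.1 p.2 ≠ 0) with hA
  set F := Finset.univ.filter
      (fun p : Fin (n+1) × Fin (n+1) => p.1 < p.2 ∧ modQ Q i j S z p.1 p.2 ≠ 0) with hF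
  -- the "special" (removed) pairs
  set spec : Fin n × Fin n → Prop := fun p =>
    ((p.1 = i ∨ p.1 = j) ∧ p.2 ∈ S) ∨ ((p.2 = i ∨ p.2 = j) ∧ p.1 ∈ S) with hspec
  -- spec implies Q nonzero
  have hspecQ : ∀ p : Fin n × Fin n, spec p → Q p.1 p.2 ≠ 0 := by
    rintro ⟨a, b⟩ (⟨hab, hb⟩ | ⟨hab, ha⟩)
    · rcases hab with rfl | rfl
      · exact hQik b hb
      · rw [← hsemi b hb]; exact hQik b hb
    · rcases hab with rfl | rfl
      · rw [hQsymm]; exact hQik a ha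
      · rw [hQsymm, ← hsemi a ha]; exact hQik a ha
  -- key characterization of modCore nonvanishing
  have hcore : ∀ a b : Fin n, a ≠ b →
      (modCore Q i j S z a b ≠ 0 ↔ (Q a b ≠ 0 ∧ ¬ spec (a, b))) := by
    intro a b hab
    simp only [hspec, modCore]
    split_ifs with h1 h2 h3 h4 h5
    · exact absurd (h1.1.trans h1.2.symm) hab
    · exact absurd (h2.1.trans h2.2.symm) hab
    · rcases h3 with ⟨rfl, rfl⟩ | ⟨rfl, rfl⟩
      · simp [hQijz, hQij, hiS, hjS]
      · constructor
        · intro _; refine ⟨by rw [hQsymm]; exact hQij, ?_⟩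
          simp [hiS, hjS]
        · intro _; exact hQijz
    · simp only [ne_eq, not_true_eq_false, false_iff, not_and, not_not]
      intro _; exact Or.inl h4
    · simp only [ne_eq, not_true_eq_false, false_iff, not_and, not_not]
      intro _; exact Or.inr h5
    · constructor
      · intro h; exact ⟨h, by tauto⟩
      · tauto
  -- modCol nonvanishing
  have hcol : ∀ c : Fin n, modCol Q i j S z c ≠ 0 ↔ c ∈ insert i (insert j S) := by
    intro c
    simp only [modCol, mem_insert]
    split_ifs with h1 h2
    · constructor
      · intro _; tauto
      · intro _; exact mul_ne_zero (by norm_num) hz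
    · simp [h2, hQik c h2]
    · push_neg at h1
      simp [h1.1, h1.2, h2]
  -- split F by whether p.2 = last
  have hsplit : F.card = (F.filter (fun p => p.2 = Fin.last n)).card
      + (F.filter (fun p => ¬ p.2 = Fin.last n)).card :=
    (Finset.card_filter_add_card_filter_not _).symm
  -- the last-column part
  have hlast : (F.filter (fun p => p.2 = Fin.last n))
      = (insert i (insert j S)).image
          (fun c : Fin n => (c.castSucc, Fin.last n)) := by
    ext ⟨a, b⟩
    simp only [hF, Finset.mem_filter, Finset.mem_univ, true_and, Finset.mem_image]
    constructor
    · rintro ⟨⟨hab, hmod⟩, rfl⟩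
      have ha : a ≠ Fin.last n := hab.ne
      refine ⟨a.castPred ha, ?_, by simp [Fin.castSucc_castPred]⟩
      rw [← hcol]
      have : modQ Q i j S z a (Fin.last n) = modCol Q i j S z (a.castPred ha) := by
        simp [modQ, ha]
      rwa [this] at hmod
    · rintro ⟨c, hc, hcq⟩
      obtain ⟨rfl, rfl⟩ : a = c.castSucc ∧ b = Fin.last n := by
        exact ⟨(Prod.ext_iff.mp hcq.symm).1, (Prod.ext_iff.mp hcq.symm).2⟩
      refine ⟨⟨Fin.castSucc_lt_last c, ?_⟩, rfl⟩
      have hne : (c.castSucc : Fin (n+1)) ≠ Fin.last n := (Fin.castSucc_lt_last c).ne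
      have : modQ Q i j S z c.castSucc (Fin.last n)
          = modCol Q i j S z ((c.castSucc).castPred hne) := by
        simp [modQ, hne]
      rw [this, Fin.castPred_castSucc]
      exact (hcol c).mpr hc
  have hlastcard : (F.filter (fun p => p.2 = Fin.last n)).card = S.card + 2 := by
    rw [hlast, Finset.card_image_of_injective _ (by
      intro a b hab; simpa [Prod.ext_iff] using hab)]
    rw [Finset.card_insert_of_notMem (by simp [hij, hiS]),
        Finset.card_insert_of_notMem hjS]
  -- the core part
  have hcoreset : (F.filter (fun p => ¬ p.2 = Fin.last n))
      = (Finset.univ.filter (fun p : Fin n × Fin n =>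
          p.1 < p.2 ∧ modCore Q i j S z p.1 p.2 ≠ 0)).image
          (fun p : Fin n × Fin n => (p.1.castSucc, p.2.castSucc)) := by
    ext ⟨a, b⟩
    simp only [hF, Finset.mem_filter, Finset.mem_univ, true_and, Finset.mem_image]
    constructor
    · rintro ⟨⟨hab, hmod⟩, hb⟩
      have ha : a ≠ Fin.last n := by
        intro h; subst h
        exact hb (le_antisymm (Fin.le_last b) hab.le)
      refine ⟨(a.castPred ha, b.castPred hb), ⟨?_, ?_⟩, by simp [Fin.castSucc_castPred]⟩
      · rwa [← Fin.castSucc_lt_castSucc_iff, Fin.castSucc_castPred, Fin.castSucc_castPred]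
      · have : modQ Q i j S z a b = modCore Q i j S z (a.castPred ha) (b.castPred hb) := by
          simp [modQ, ha, hb]
        rwa [this] at hmod
    · rintro ⟨⟨c, d⟩, ⟨hcd, hmod⟩, hq⟩
      obtain ⟨rfl, rfl⟩ : a = c.castSucc ∧ b = d.castSucc :=
        ⟨(Prod.ext_iff.mp hq.symm).1, (Prod.ext_iff.mp hq.symm).2⟩
      have ha : (c.castSucc : Fin (n+1)) ≠ Fin.last n := (Fin.castSucc_lt_last c).ne
      have hb : (d.castSucc : Fin (n+1)) ≠ Fin.last n := (Fin.castSucc_lt_last d).ne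
      refine ⟨⟨Fin.castSucc_lt_castSucc_iff.mpr hcd, ?_⟩, hb⟩
      have : modQ Q i j S z c.castSucc d.castSucc
          = modCore Q i j S z ((c.castSucc).castPred ha) ((d.castSucc).castPred hb) := by
        simp [modQ, ha, hb]
      rw [this, Fin.castPred_castSucc, Fin.castPred_castSucc]
      exact hmod
  -- rewrite the core filter in terms of A and spec
  have hF2 : (Finset.univ.filter (fun p : Fin n × Fin n =>
      p.1 < p.2 ∧ modCore Q i j S z p.1 p.2 ≠ 0)) = A.filter (fun p => ¬ spec p) := by
    ext ⟨a, b⟩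
    simp only [hA, Finset.mem_filter, Finset.mem_univ, true_and]
    constructor
    · rintro ⟨hab, hmod⟩
      have := (hcore a b hab.ne).mp hmod
      exact ⟨⟨hab, this.1⟩, this.2⟩
    · rintro ⟨⟨hab, hq⟩, hs⟩
      exact ⟨hab, (hcore a b hab.ne).mpr ⟨hq, hs⟩⟩
  -- count the special pairs
  have hD : (A.filter (fun p => spec p)).card = 2 * S.card := by
    have himg : A.filter (fun p => spec p)
        = (({i, j} : Finset (Fin n)) ×ˢ S).image
            (fun q : Fin n × Fin n => if q.1 < q.2 then (q.1, q.2) else (q.2, q.1)) := by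
      ext ⟨a, b⟩
      simp only [hA, hspec, Finset.mem_filter, Finset.mem_univ, true_and,
        Finset.mem_image, Finset.mem_product, Finset.mem_insert, Finset.mem_singleton]
      constructor
      · rintro ⟨⟨hab, hq⟩, hs | hs⟩
        · exact ⟨(a, b), ⟨hs.1, hs.2⟩, by simp [hab]⟩
        · exact ⟨(b, a), ⟨hs.1, hs.2⟩, by simp [not_lt.mpr hab.le]⟩
      · rintro ⟨⟨c, d⟩, ⟨hc, hd⟩, hq⟩
        have hcd : c ≠ d := by rintro rfl; rcases hc with rfl | rfl <;> [exact hiS hd; exact hjS hd]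
        by_cases h : c < d
        · simp only [h, if_pos] at hq
          obtain ⟨rfl, rfl⟩ : a = c ∧ b = d := ⟨(Prod.ext_iff.mp hq.symm).1, (Prod.ext_iff.mp hq.symm).2⟩
          exact ⟨⟨h, hspecQ (a, b) (Or.inl ⟨hc, hd⟩)⟩, Or.inl ⟨hc, hd⟩⟩
        · simp only [h, if_neg, if_false] at hq
          obtain ⟨rfl, rfl⟩ : a = d ∧ b = c := ⟨(Prod.ext_iff.mp hq.symm).1, (Prod.ext_iff.mp hq.symm).2⟩
          have hlt : a < b := lt_of_le_of_ne (not_lt.mp h) (Ne.symm hcd)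
          exact ⟨⟨hlt, hspecQ (a, b) (Or.inr ⟨hc, hd⟩)⟩, Or.inr ⟨hc, hd⟩⟩
    have hinjOn : Set.InjOn
        (fun q : Fin n × Fin n => if q.1 < q.2 then (q.1, q.2) else (q.2, q.1))
        (↑(({i, j} : Finset (Fin n)) ×ˢ S) : Set (Fin n × Fin n)) := by
      rintro ⟨c, d⟩ hcd ⟨c', d'⟩ hcd' heq
      simp only [Finset.mem_coe, Finset.mem_product, Finset.mem_insert,
        Finset.mem_singleton] at hcd hcd'
      replace heq : (if c < d then (c, d) else (d, c))
          = (if c' < d' then (c', d') else (d', c')) := heq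
      by_cases hc1 : c < d
      · by_cases hc2 : c' < d'
        · rw [if_pos hc1, if_pos hc2] at heq; exact heq
        · rw [if_pos hc1, if_neg hc2] at heq
          exfalso
          have h1 : c = d' := congrArg Prod.fst heq
          have h4 : d' ∈ S := hcd'.2
          rw [← h1] at h4
          rcases hcd.1 with rfl | rfl
          · exact hiS h4
          · exact hjS h4
      · by_cases hc2 : c' < d'
        · rw [if_neg hc1, if_pos hc2] at heq
          exfalso
          have h1 : d = c' := congrArg Prod.fst heq
          have h4 : d ∈ S := hcd.2
          rw [h1] at h4
          rcases hcd'.1 with rfl | rfl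
          · exact hiS h4
          · exact hjS h4
        · rw [if_neg hc1, if_neg hc2] at heq
          exact Prod.ext (congrArg Prod.snd heq) (congrArg Prod.fst heq)
    rw [himg, Finset.card_image_of_injOn hinjOn, Finset.card_product,
      Finset.card_pair hij]
  have hDsub : (A.filter (fun p => spec p)).card + (A.filter (fun p => ¬ spec p)).card
      = A.card := Finset.card_filter_add_card_filter_not _
  -- injectivity of the castSucc product map
  have hinj : Function.Injective (fun p : Fin n × Fin n => (p.1.castSucc, p.2.castSucc)) := by
    rintro ⟨a, b⟩ ⟨c, d⟩ h
    simp only [Prod.ext_iff] at h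
    exact Prod.ext (Fin.castSucc_injective n h.1) (Fin.castSucc_injective n h.2)
  have hcorecard : (F.filter (fun p => ¬ p.2 = Fin.last n)).card
      = A.card - 2 * S.card := by
    rw [hcoreset, Finset.card_image_of_injective _ hinj, hF2]
    omega
  have h2S : 2 * S.card ≤ A.card := by
    calc 2 * S.card = (A.filter (fun p => spec p)).card := hD.symm
    _ ≤ A.card := Finset.card_filter_le _ _
  have hFcard : F.card = A.card - 2 * S.card + (S.card + 2) := by
    omega
  have hccF : couplingCount (modQ Q i j S z) = F.card := hcc _
  have hccA : couplingCount Q = A.card := hcc _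
  constructor
  · rw [hccF, hccA, hFcard]
    push_cast
    omega
  · intro h3
    rw [hccF, hccA, hFcard]
    omega
end
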